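/- Let G be a finite simple graph with clique partition π = {W₁,…,W_r}. Then the clique-whiskered graph G^π is vertex decomposable. -/

import Mathlib

def cliqueWhisker {V ι : Type*} (G : SimpleGraph V) (p : V → ι) :
    SimpleGraph (V ⊕ ι) :=
  SimpleGraph.fromRel (fun a b =>
    match a, b with
    | Sum.inl u, Sum.inl v => G.Adj u v
    | Sum.inl u, Sum.inr i => p u = i
    | _, _ => False)

def whiskerGraph {V : Type*} (G : SimpleGraph V) : SimpleGraph (V ⊕ V) :=
  SimpleGraph.fromRel (fun a b =>
    match a, b with
    | Sum.inl u, Sum.inl v => G.Adj u v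
    | Sum.inl u, Sum.inr w => u = w
    | _, _ => False)

def IsVertexCover {V : Type*} (G : SimpleGraph V) (C : Set V) : Prop :=
  ∀ ⦃u v : V⦄, G.Adj u v → u ∈ C ∨ v ∈ C

def IsMinVertexCover {V : Type*} (G : SimpleGraph V) (C : Set V) : Prop :=
  IsVertexCover G C ∧ ∀ D ⊆ C, IsVertexCover G D → D = C

def IsIndep {V : Type*} (G : SimpleGraph V) (A : Set V) : Prop :=
  ∀ u ∈ A, ∀ v ∈ A, ¬ G.Adj u v

def complexLink {V : Type*} [DecidableEq V] (Δ : Set (Finset V)) (x : V) :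
    Set (Finset V) :=
  {F | x ∉ F ∧ insert x F ∈ Δ}

def complexDel {V : Type*} (Δ : Set (Finset V)) (x : V) : Set (Finset V) :=
  {F | x ∉ F ∧ F ∈ Δ}

def IsFacet {V : Type*} (Δ : Set (Finset V)) (F : Finset V) : Prop :=
  F ∈ Δ ∧ ∀ G ∈ Δ, F ⊆ G → F = G

inductive VertexDecomposable {V : Type*} [DecidableEq V] : Set (Finset V) → Prop
  | void : VertexDecomposable ∅
  | simplex (F : Finset V) : VertexDecomposable {G | G ⊆ F}
  | step (Δ : Set (Finset V)) (x : V)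
      (hlink : VertexDecomposable (complexLink Δ x))
      (hdel : VertexDecomposable (complexDel Δ x))
      (hfac : ∀ F, IsFacet (complexDel Δ x) F → IsFacet Δ F) :
      VertexDecomposable Δ

def indepComplex {V : Type*} (G : SimpleGraph V) : Set (Finset V) :=
  {F | IsIndep G (↑F : Set V)}

/-!
Restrict the independence complex to a vertex set `S` that contains the whisker `w_{p u}`
together with every original vertex `u`, and induct on `S`. An original vertex `u ∈ S` is a
shedding vertex, because its whisker `w = w_{p u}` is dominated by it: `N[w] = W_{p u} ∪ {w}`,
which lies in `N[u]` since `W_{p u}` is a clique through `u`. Deleting `u`, or passing to the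
link of `u` (which removes `N[u] ⊇ W_{p u} ∪ {w}`), keeps the invariant, and once `S` contains
only whiskers it is independent, so the complex is a simplex.
-/

section IndependenceComplex

variable {W : Type*}

lemma IsIndep.mono {H : SimpleGraph W} {A B : Set W} (hAB : A ⊆ B) (hB : IsIndep H B) :
    IsIndep H A :=
  fun u hu v hv => hB u (hAB hu) v (hAB hv)

lemma isIndep_insert {H : SimpleGraph W} {x : W} {A : Set W} :
    IsIndep H (insert x A) ↔ IsIndep H A ∧ ∀ y ∈ A, ¬ H.Adj x y := by
  refine ⟨fun h => ⟨h.mono (Set.subset_insert x A), fun y hy =>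
    h x (Set.mem_insert x A) y (Set.mem_insert_of_mem x hy)⟩, ?_⟩
  rintro ⟨hA, hx⟩ u hu v hv
  rcases hu with rfl | hu <;> rcases hv with rfl | hv
  · exact H.loopless.irrefl _
  · exact hx v hv
  · exact fun h => hx u hu h.symm
  · exact hA u hu v hv

def inducedSubcomplex (Δ : Set (Finset W)) (S : Finset W) : Set (Finset W) :=
  {F | F ∈ Δ ∧ F ⊆ S}

lemma complexDel_inducedSubcomplex [DecidableEq W] (Δ : Set (Finset W)) (S : Finset W)
    (x : W) :
    complexDel (inducedSubcomplex Δ S) x = inducedSubcomplex Δ (S.erase x) := by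
  ext F
  simp only [complexDel, inducedSubcomplex, Set.mem_ofPred_eq, Finset.subset_erase]
  tauto

lemma complexLink_inducedSubcomplex_indepComplex [DecidableEq W] (H : SimpleGraph W)
    [DecidableRel H.Adj] {S : Finset W} {x : W} (hx : x ∈ S) :
    complexLink (inducedSubcomplex (indepComplex H) S) x =
      inducedSubcomplex (indepComplex H) (S.filter fun y => y ≠ x ∧ ¬ H.Adj x y) := by
  ext F
  simp only [complexLink, inducedSubcomplex, indepComplex, Set.mem_ofPred_eq, Finset.coe_insert,
    isIndep_insert, Finset.insert_subset_iff]
  constructor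
  · rintro ⟨hxF, ⟨hF, hadj⟩, -, hFS⟩
    exact ⟨hF, fun y hy =>
      Finset.mem_filter.mpr ⟨hFS hy, fun h => hxF (h ▸ hy), hadj y hy⟩⟩
  · rintro ⟨hF, hFS⟩
    have hFS' := fun y (hy : y ∈ F) => Finset.mem_filter.mp (hFS hy)
    exact ⟨fun h => (hFS' _ h).2.1 rfl, ⟨hF, fun y hy => (hFS' y hy).2.2⟩, hx,
      fun y hy => (hFS' y hy).1⟩

lemma vertexDecomposable_inducedSubcomplex_indepComplex_of_isIndep [DecidableEq W]
    {H : SimpleGraph W} {S : Finset W} (hS : IsIndep H S) :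
    VertexDecomposable (inducedSubcomplex (indepComplex H) S) := by
  have hsimplex : inducedSubcomplex (indepComplex H) S = {F | F ⊆ S} := by
    ext F
    exact ⟨And.right, fun hF => ⟨hS.mono (Finset.coe_subset.mpr hF), hF⟩⟩
  rw [hsimplex]
  exact VertexDecomposable.simplex S

lemma isFacet_of_isFacet_complexDel_of_dominates [DecidableEq W] {H : SimpleGraph W}
    {S : Finset W} {x w : W} (hw : w ∈ S) (hxw : H.Adj x w)
    (hdom : ∀ y, H.Adj w y → y = x ∨ H.Adj x y)
    {F : Finset W} (hF : IsFacet (complexDel (inducedSubcomplex (indepComplex H) S) x) F) :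
    IsFacet (inducedSubcomplex (indepComplex H) S) F := by
  rw [complexDel_inducedSubcomplex] at hF
  obtain ⟨⟨hFindep, hFS⟩, hFmax⟩ := hF
  refine ⟨⟨hFindep, hFS.trans (Finset.erase_subset x S)⟩,
    fun K ⟨hKindep, hKS⟩ hFK => ?_⟩
  by_cases hxK : x ∈ K
  · exfalso
    have hxF : ∀ y ∈ F, ¬ H.Adj x y := fun y hy => hKindep x hxK y (hFK hy)
    have hwF : insert w F ∈ inducedSubcomplex (indepComplex H) (S.erase x) := by
      refine ⟨?_, Finset.insert_subset (Finset.mem_erase.mpr ⟨hxw.ne', hw⟩) hFS⟩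
      show IsIndep H ↑(insert w F)
      rw [Finset.coe_insert]
      refine isIndep_insert.mpr ⟨hFindep, fun y hy hwy => ?_⟩
      rcases hdom y hwy with rfl | hxy
      · exact (Finset.mem_erase.mp (hFS hy)).1 rfl
      · exact hxF y hy hxy
    have hwF' : w ∈ F := (hFmax _ hwF (Finset.subset_insert w F)) ▸ Finset.mem_insert_self w F
    exact hKindep x hxK w (hFK hwF') hxw
  · exact hFmax K ⟨hKindep, Finset.subset_erase.mpr ⟨hKS, hxK⟩⟩ hFK

end IndependenceComplex

section CliqueWhisker

variable {V ι : Type*} {G : SimpleGraph V} {p : V → ι}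

@[simp]
lemma cliqueWhisker_adj_inl_inl {u v : V} :
    (cliqueWhisker G p).Adj (Sum.inl u) (Sum.inl v) ↔ G.Adj u v := by
  simp only [cliqueWhisker, SimpleGraph.fromRel_adj, ne_eq, Sum.inl.injEq]
  exact ⟨fun ⟨_, h⟩ => h.elim id fun h => h.symm, fun h => ⟨h.ne, Or.inl h⟩⟩

@[simp]
lemma cliqueWhisker_adj_inl_inr {u : V} {i : ι} :
    (cliqueWhisker G p).Adj (Sum.inl u) (Sum.inr i) ↔ p u = i := by
  simp [cliqueWhisker]

@[simp]
lemma cliqueWhisker_adj_inr_inl {u : V} {i : ι} :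
    (cliqueWhisker G p).Adj (Sum.inr i) (Sum.inl u) ↔ p u = i := by
  simp [cliqueWhisker]

@[simp]
lemma cliqueWhisker_not_adj_inr_inr {i j : ι} :
    ¬ (cliqueWhisker G p).Adj (Sum.inr i) (Sum.inr j) := by
  simp [cliqueWhisker]

lemma vertexDecomposable_inducedSubcomplex_cliqueWhisker [DecidableEq V] [DecidableEq ι]
    (hclique : ∀ u v : V, p u = p v → u ≠ v → G.Adj u v) (S : Finset (V ⊕ ι))
    (hS : ∀ u, Sum.inl u ∈ S → Sum.inr (p u) ∈ S) :
    VertexDecomposable (inducedSubcomplex (indepComplex (cliqueWhisker G p)) S) := by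
  classical
  induction S using Finset.strongInduction with
  | H S ih =>
  by_cases hu : ∃ u, Sum.inl u ∈ S
  swap
  · refine vertexDecomposable_inducedSubcomplex_indepComplex_of_isIndep fun a ha b hb => ?_
    rcases a with a | a
    · exact (hu ⟨a, ha⟩).elim
    rcases b with b | b
    · exact (hu ⟨b, hb⟩).elim
    · exact cliqueWhisker_not_adj_inr_inr
  obtain ⟨u, hu⟩ := hu
  refine VertexDecomposable.step _ (Sum.inl u) ?_ ?_
    fun F => isFacet_of_isFacet_complexDel_of_dominates (hS u hu) (by simp) ?_
  · rw [complexLink_inducedSubcomplex_indepComplex _ hu]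
    refine ih _ (Finset.filter_ssubset.mpr ⟨_, hu, by simp⟩) fun v hv => ?_
    simp only [Finset.mem_filter, ne_eq, Sum.inl.injEq, cliqueWhisker_adj_inl_inl] at hv
    refine Finset.mem_filter.mpr ⟨hS v hv.1, by simp, ?_⟩
    simp only [cliqueWhisker_adj_inl_inr]
    exact fun hpv => hv.2.2 (hclique u v hpv (Ne.symm hv.2.1))
  · rw [complexDel_inducedSubcomplex]
    refine ih _ (Finset.erase_ssubset hu) fun v hv => ?_
    exact Finset.mem_erase.mpr ⟨by simp, hS v (Finset.mem_of_mem_erase hv)⟩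
  · rintro (v | i) hadj
    · simp only [cliqueWhisker_adj_inr_inl, Sum.inl.injEq, cliqueWhisker_adj_inl_inl] at hadj ⊢
      by_cases hvu : v = u
      · exact Or.inl hvu
      · exact Or.inr (hclique u v hadj.symm (Ne.symm hvu))
    · exact (cliqueWhisker_not_adj_inr_inr hadj).elim

end CliqueWhisker

theorem stmt6_general {V : Type*} [Fintype V] [DecidableEq V] {r : ℕ}
    (G : SimpleGraph V) (p : V → Fin r)
    (hclique : ∀ u v : V, p u = p v → u ≠ v → G.Adj u v) :
    VertexDecomposable (indepComplex (cliqueWhisker G p)) := by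
  have hfull : indepComplex (cliqueWhisker G p) =
      inducedSubcomplex (indepComplex (cliqueWhisker G p)) Finset.univ := by
    ext F
    simp [inducedSubcomplex]
  rw [hfull]
  exact vertexDecomposable_inducedSubcomplex_cliqueWhisker hclique _ fun u _ => Finset.mem_univ _

theorem stmt6 {V : Type*} [Fintype V] [DecidableEq V] {r : ℕ}
    (G : SimpleGraph V) (p : V → Fin r)
    (hclique : ∀ u v : V, p u = p v → u ≠ v → G.Adj u v)
    (hsurj : Function.Surjective p) :
    VertexDecomposable (indepComplex (cliqueWhisker G p)) :=
  stmt6_general G p hclique
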